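/- Extended forward diamond for CCSK with replication: if X →[θ₁] X₁ →[θ₂] Y with θ₁ ⌣ θ₂ in CCSK extended with the replication operator, then there exist X₂ and labels θ̂₁, θ̂₂ with X →[θ̂₂] X₂ →[θ̂₁] Y and σ(θ̂ᵢ) = σ(θᵢ) for i ∈ {1,2}, where σ is the collapsing function identifying ! and |_R prefixes. -/

import Mathlib

namespace CCSK

/-- Labels: names, co-names, and the silent action τ. -/
inductive Lab : Type
  | name : ℕ → Lab
  | coname : ℕ → Lab
  | tau : Lab
deriving DecidableEq

/-- Complement of a label. -/
def Lab.co : Lab → Lab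
  | .name n => .coname n
  | .coname n => .name n
  | .tau => .tau

abbrev Key := ℕ

/-- CCSK processes (with a replication operator for the extended calculus). -/
inductive Proc : Type
  | nil : Proc
  | pre : Lab → Proc → Proc          -- α.X
  | kpre : Lab → Key → Proc → Proc   -- α[k].X
  | par : Proc → Proc → Proc
  | sum : Proc → Proc → Proc
  | res : Proc → ℕ → Proc            -- X \ a
  | repl : Proc → Proc               -- !X
deriving DecidableEq

/-- Keys occurring in a process. -/
def Proc.keys : Proc → Set Key
  | .nil => ∅
  | .pre _ X => X.keys
  | .kpre _ k X => insert k X.keys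
  | .par X Y => X.keys ∪ Y.keys
  | .sum X Y => X.keys ∪ Y.keys
  | .res X _ => X.keys
  | .repl X => X.keys

/-- A process is standard when it contains no keys. -/
def Proc.std (X : Proc) : Prop := X.keys = ∅

/-- Multiset of keyed-prefix occurrences (label, key). -/
def Proc.keyed : Proc → Multiset (Lab × Key)
  | .nil => 0
  | .pre _ X => X.keyed
  | .kpre a k X => (a, k) ::ₘ X.keyed
  | .par X Y => X.keyed + Y.keyed
  | .sum X Y => X.keyed + Y.keyed
  | .res X _ => X.keyed
  | .repl X => X.keyed

/-- Enhanced keyed labels. -/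
inductive ELab : Type
  | base : Lab → Key → ELab          -- α[k]
  | parL : ELab → ELab               -- |_L θ
  | parR : ELab → ELab               -- |_R θ
  | bang : ELab → ELab               -- !θ (replication)
  | syn : ELab → ELab → ELab         -- ⟨θ_L, θ_R⟩
deriving DecidableEq

/-- Underlying action label ℓ(θ). -/
def ELab.act : ELab → Lab
  | .base a _ => a
  | .parL θ => θ.act
  | .parR θ => θ.act
  | .bang θ => θ.act
  | .syn _ _ => .tau

/-- Key of an enhanced keyed label. -/
def ELab.key : ELab → Key
  | .base _ k => k
  | .parL θ => θ.key
  | .parR θ => θ.key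
  | .bang θ => θ.key
  | .syn θ _ => θ.key

/-- Dependency relation ⋖ on enhanced keyed labels (including the extension
for replication labels). -/
inductive Dep : ELab → ELab → Prop
  | base (a : Lab) (k : Key) (θ : ELab) : Dep (.base a k) θ
  | parL {θ θ'} : Dep θ θ' → Dep (.parL θ) (.parL θ')
  | parR {θ θ'} : Dep θ θ' → Dep (.parR θ) (.parR θ')
  | synSrcL {θL θR θ} : Dep θL θ → Dep (.syn θL θR) θ
  | synSrcR {θL θR θ} : Dep θR θ → Dep (.syn θL θR) θ
  | synTgtL {θ θL θR} : Dep θ θL → Dep θ (.syn θL θR)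
  | synTgtR {θ θL θR} : Dep θ θR → Dep θ (.syn θL θR)
  | synSynL {θL θR θL' θR'} : Dep θL θL' → Dep (.syn θL θR) (.syn θL' θR')
  | synSynR {θL θR θL' θR'} : Dep θR θR' → Dep (.syn θL θR) (.syn θL' θR')
  | bangBang (θ : ELab) : Dep (.bang θ) (.bang θ)
  | bangParL (θ θ' : ELab) : Dep (.bang θ) (.parL θ')
  | bangParRSynL (θL θR θ'' : ELab) : Dep (.bang (.syn θL θR)) (.parR (.parL θ''))
  | bangParRSynR (θL θR θ'' : ELab) : Dep (.bang (.syn θL θR)) (.parR (.parR θ''))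
  | bangParR {θ θ' : ELab} : Dep θ θ' → Dep (.bang θ) (.parR θ')

/-- Concurrency of labels: no dependency in either direction. -/
def Conc (θ₁ θ₂ : ELab) : Prop := ¬ Dep θ₁ θ₂ ∧ ¬ Dep θ₂ θ₁

/-- The proved forward LTS for CCSK (without replication rules). -/
inductive Fwd : Proc → ELab → Proc → Prop
  | act {a k X} : Proc.std X → Fwd (.pre a X) (.base a k) (.kpre a k X)
  | pre {a : Lab} {k : Key} {X X' : Proc} {θ : ELab} : Fwd X θ X' → θ.key ≠ k →
      Fwd (.kpre a k X) θ (.kpre a k X')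
  | res {X X' : Proc} {θ : ELab} {a : ℕ} : Fwd X θ X' → θ.act ≠ .name a → θ.act ≠ .coname a →
      Fwd (X.res a) θ (X'.res a)
  | parL {X X' Y : Proc} {θ : ELab} : Fwd X θ X' → θ.key ∉ Y.keys →
      Fwd (X.par Y) (.parL θ) (X'.par Y)
  | parR {Y Y' X : Proc} {θ : ELab} : Fwd Y θ Y' → θ.key ∉ X.keys →
      Fwd (X.par Y) (.parR θ) (X.par Y')
  | syn {X X' Y Y' : Proc} {θ₁ θ₂ : ELab} : Fwd X θ₁ X' → Fwd Y θ₂ Y' →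
      θ₁.act ≠ .tau → θ₂.act = θ₁.act.co → θ₂.key = θ₁.key →
      Fwd (X.par Y) (.syn (.parL θ₁) (.parR θ₂)) (X'.par Y')
  | sumL {X θ X' Y} : Fwd X θ X' → Proc.std Y → Fwd (X.sum Y) θ (X'.sum Y)
  | sumR {Y θ Y' X} : Fwd Y θ Y' → Proc.std X → Fwd (X.sum Y) θ (X.sum Y')

/-- The proved backward LTS for CCSK (exact symmetric of the forward one).
`Bwd X θ Y` means `X ⇝[θ] Y`. -/
inductive Bwd : Proc → ELab → Proc → Prop
  | act {a k X} : Proc.std X → Bwd (.kpre a k X) (.base a k) (.pre a X)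
  | pre {a : Lab} {k : Key} {X' X : Proc} {θ : ELab} : Bwd X' θ X → θ.key ≠ k →
      Bwd (.kpre a k X') θ (.kpre a k X)
  | res {X' X : Proc} {θ : ELab} {a : ℕ} : Bwd X' θ X → θ.act ≠ .name a → θ.act ≠ .coname a →
      Bwd (X'.res a) θ (X.res a)
  | parL {X' X Y : Proc} {θ : ELab} : Bwd X' θ X → θ.key ∉ Y.keys →
      Bwd (X'.par Y) (.parL θ) (X.par Y)
  | parR {Y' Y X : Proc} {θ : ELab} : Bwd Y' θ Y → θ.key ∉ X.keys →
      Bwd (X.par Y') (.parR θ) (X.par Y)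
  | syn {X' X Y' Y : Proc} {θ₁ θ₂ : ELab} : Bwd X' θ₁ X → Bwd Y' θ₂ Y →
      θ₁.act ≠ .tau → θ₂.act = θ₁.act.co → θ₂.key = θ₁.key →
      Bwd (X'.par Y') (.syn (.parL θ₁) (.parR θ₂)) (X.par Y)
  | sumL {X' θ X Y} : Bwd X' θ X → Proc.std Y → Bwd (X'.sum Y) θ (X.sum Y)
  | sumR {Y' θ Y X} : Bwd Y' θ Y → Proc.std X → Bwd (X.sum Y') θ (X.sum Y)

/-- Combined LTS: `Step true` is forward, `Step false` is backward. -/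
def Step : Bool → Proc → ELab → Proc → Prop
  | true => Fwd
  | false => Bwd

/-- Reachability: connected to a standard process by forward/backward moves. -/
def Reachable (X : Proc) : Prop :=
  ∃ X₀ : Proc, X₀.std ∧
    Relation.ReflTransGen (fun A B => ∃ d θ, Step d A θ B) X₀ X

/-- The proved forward LTS for CCSK extended with replication. -/
inductive FwdR : Proc → ELab → Proc → Prop
  | act {a k X} : Proc.std X → FwdR (.pre a X) (.base a k) (.kpre a k X)
  | pre {a : Lab} {k : Key} {X X' : Proc} {θ : ELab} : FwdR X θ X' → θ.key ≠ k →
      FwdR (.kpre a k X) θ (.kpre a k X')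
  | res {X X' : Proc} {θ : ELab} {a : ℕ} : FwdR X θ X' → θ.act ≠ .name a → θ.act ≠ .coname a →
      FwdR (X.res a) θ (X'.res a)
  | parL {X X' Y : Proc} {θ : ELab} : FwdR X θ X' → θ.key ∉ Y.keys →
      FwdR (X.par Y) (.parL θ) (X'.par Y)
  | parR {Y Y' X : Proc} {θ : ELab} : FwdR Y θ Y' → θ.key ∉ X.keys →
      FwdR (X.par Y) (.parR θ) (X.par Y')
  | syn {X X' Y Y' : Proc} {θ₁ θ₂ : ELab} : FwdR X θ₁ X' → FwdR Y θ₂ Y' →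
      θ₁.act ≠ .tau → θ₂.act = θ₁.act.co → θ₂.key = θ₁.key →
      FwdR (X.par Y) (.syn (.parL θ₁) (.parR θ₂)) (X'.par Y')
  | sumL {X θ X' Y} : FwdR X θ X' → Proc.std Y → FwdR (X.sum Y) θ (X'.sum Y)
  | sumR {Y θ Y' X} : FwdR Y θ Y' → Proc.std X → FwdR (X.sum Y) θ (X.sum Y')
  | repl1 {X X' : Proc} {θ : ELab} : FwdR X θ X' →
      FwdR (.repl X) (.bang θ) ((Proc.repl X).par X')
  | repl2 {X X' X'' : Proc} {θ₁ θ₂ : ELab} : FwdR X θ₁ X' → FwdR X θ₂ X'' →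
      θ₁.act ≠ .tau → θ₂.act = θ₁.act.co → θ₂.key = θ₁.key →
      FwdR (.repl X) (.bang (.syn (.parL θ₁) (.parR θ₂)))
        ((Proc.repl X).par (X'.par X''))

/-- The proved backward LTS for CCSK extended with replication. -/
inductive BwdR : Proc → ELab → Proc → Prop
  | act {a k X} : Proc.std X → BwdR (.kpre a k X) (.base a k) (.pre a X)
  | pre {a : Lab} {k : Key} {X' X : Proc} {θ : ELab} : BwdR X' θ X → θ.key ≠ k →
      BwdR (.kpre a k X') θ (.kpre a k X)
  | res {X' X : Proc} {θ : ELab} {a : ℕ} : BwdR X' θ X → θ.act ≠ .name a → θ.act ≠ .coname a →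
      BwdR (X'.res a) θ (X.res a)
  | parL {X' X Y : Proc} {θ : ELab} : BwdR X' θ X → θ.key ∉ Y.keys →
      BwdR (X'.par Y) (.parL θ) (X.par Y)
  | parR {Y' Y X : Proc} {θ : ELab} : BwdR Y' θ Y → θ.key ∉ X.keys →
      BwdR (X.par Y') (.parR θ) (X.par Y)
  | syn {X' X Y' Y : Proc} {θ₁ θ₂ : ELab} : BwdR X' θ₁ X → BwdR Y' θ₂ Y →
      θ₁.act ≠ .tau → θ₂.act = θ₁.act.co → θ₂.key = θ₁.key →
      BwdR (X'.par Y') (.syn (.parL θ₁) (.parR θ₂)) (X.par Y)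
  | sumL {X' θ X Y} : BwdR X' θ X → Proc.std Y → BwdR (X'.sum Y) θ (X.sum Y)
  | sumR {Y' θ Y X} : BwdR Y' θ Y → Proc.std X → BwdR (X.sum Y') θ (X.sum Y)
  | repl1 {X' X : Proc} {θ : ELab} : BwdR X' θ X →
      BwdR ((Proc.repl X).par X') (.bang θ) (.repl X)
  | repl2 {X' X'' X : Proc} {θ₁ θ₂ : ELab} : BwdR X' θ₁ X → BwdR X'' θ₂ X →
      θ₁.act ≠ .tau → θ₂.act = θ₁.act.co → θ₂.key = θ₁.key →
      BwdR ((Proc.repl X).par (X'.par X''))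
        (.bang (.syn (.parL θ₁) (.parR θ₂))) (.repl X)

/-- Combined extended LTS. -/
def StepR : Bool → Proc → ELab → Proc → Prop
  | true => FwdR
  | false => BwdR

/-- Reachability in the extended calculus. -/
def ReachableR (X : Proc) : Prop :=
  ∃ X₀ : Proc, X₀.std ∧
    Relation.ReflTransGen (fun A B => ∃ d θ, StepR d A θ B) X₀ X

/-- Traces: sequences of composable (forward or backward) transitions. -/
inductive Trace : Proc → Proc → Type
  | nil (X : Proc) : Trace X X
  | cons {X Y Z : Proc} (d : Bool) (θ : ELab) (s : Step d X θ Y)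
      (T : Trace Y Z) : Trace X Z

/-- Composition of traces. -/
def Trace.comp : {X Y Z : Proc} → Trace X Y → Trace Y Z → Trace X Z
  | _, _, _, .nil _, U => U
  | _, _, _, .cons d θ s T, U => .cons d θ s (Trace.comp T U)

/-- Length of a trace. -/
def Trace.length : {X Y : Proc} → Trace X Y → ℕ
  | _, _, .nil _ => 0
  | _, _, .cons _ _ _ T => Trace.length T + 1

/-- All transitions of a trace have direction `d`. -/
def Trace.AllDir (d : Bool) : {X Y : Proc} → Trace X Y → Prop
  | _, _, .nil _ => True
  | _, _, .cons d' _ _ T => d' = d ∧ Trace.AllDir d T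

/-- Causal equivalence of traces: the least equivalence relation, closed under
composition, cancelling a transition followed by its reverse, and swapping the
two sides of a concurrency square. -/
inductive CEq : {X Y : Proc} → Trace X Y → Trace X Y → Prop
  | refl {X Y} (T : Trace X Y) : CEq T T
  | symm {X Y} {T T' : Trace X Y} : CEq T T' → CEq T' T
  | trans {X Y} {T T' T'' : Trace X Y} : CEq T T' → CEq T' T'' → CEq T T''
  | congr {X Y Z : Proc} {d θ} (s : Step d X θ Y) {T T' : Trace Y Z} :
      CEq T T' → CEq (Trace.cons d θ s T) (Trace.cons d θ s T')
  | cancel {X Y Z : Proc} {d θ} (s : Step d X θ Y) (s' : Step (!d) Y θ X)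
      (T : Trace X Z) :
      CEq (Trace.cons d θ s (Trace.cons (!d) θ s' T)) T
  | square {X X₁ X₂ Y Z : Proc} {d₁ d₂ θ₁ θ₂}
      (s₁ : Step d₁ X θ₁ X₁) (t₂ : Step d₂ X₁ θ₂ Y)
      (s₂ : Step d₂ X θ₂ X₂) (t₁ : Step d₁ X₂ θ₁ Y)
      (hc : Conc θ₁ θ₂) (T : Trace Y Z) :
      CEq (Trace.cons d₁ θ₁ s₁ (Trace.cons d₂ θ₂ t₂ T))
          (Trace.cons d₂ θ₂ s₂ (Trace.cons d₁ θ₁ t₁ T))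

/-- Removal of the keyed prefix α[k]. -/
def remP (a : Lab) (k : Key) : Proc → Proc
  | .nil => .nil
  | .pre b X => .pre b X
  | .kpre b m X => if b = a ∧ m = k then X else .kpre b m (remP a k X)
  | .par X Y => .par (remP a k X) (remP a k Y)
  | .sum X Y => .sum (remP a k X) (remP a k Y)
  | .res X n => .res (remP a k X) n
  | .repl X => .repl (remP a k X)

/-- rem_k^α : remove α[k] and its complement (only α[k] when α = τ). -/
def remK (a : Lab) (k : Key) (X : Proc) : Proc :=
  if a = Lab.tau then remP a k X else remP a k (remP a.co k X)

/-- Left projection of enhanced keyed labels (partial). -/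
def projL : ELab → Option ELab
  | .parL θ => some θ
  | .syn (.parL θL) _ => some θL
  | _ => none

/-- Right projection of enhanced keyed labels (partial). -/
def projR : ELab → Option ELab
  | .parR θ => some θ
  | .syn _ (.parR θR) => some θR
  | _ => none

/-- Projection selector: `true` is left, `false` is right. -/
def eproj : Bool → ELab → Option ELab
  | true => projL
  | false => projR

/-- Component selector for parallel processes. -/
def side (b : Bool) (L R : Proc) : Proc := if b then L else R

/-- Labels of the shapes arising from a parallel composition. -/
def ParShape (θ : ELab) : Prop :=
  (∃ φ, θ = ELab.parL φ) ∨ (∃ φ, θ = ELab.parR φ) ∨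
    ∃ φ ψ, θ = ELab.syn (ELab.parL φ) (ELab.parR ψ)

/-- The collapsing function σ identifying ! and |_R prefixes. -/
def collapse : ELab → ELab
  | .base a k => .base a k
  | .parL θ => .parL (collapse θ)
  | .parR θ => .parR (collapse θ)
  | .bang θ => .parR (collapse θ)
  | .syn θ₁ θ₂ => .syn (collapse θ₁) (collapse θ₂)

/-- Sub-term relation: strips sums, restrictions and executed keyed prefixes.
`Strip X Y` means X is a sub-term of Y. -/
inductive Strip : Proc → Proc → Prop
  | refl (X : Proc) : Strip X X
  | sumL {X Y Z : Proc} : Strip X Y → Strip X (Y.sum Z)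
  | sumR {X Y Z : Proc} : Strip X Y → Strip X (Z.sum Y)
  | res {X Y : Proc} {a : ℕ} : Strip X Y → Strip X (Y.res a)
  | kpre {X Y : Proc} {a : Lab} {k : Key} : Strip X Y → Strip X (.kpre a k Y)

/-- A forward transition of the proved LTS, as an object. -/
structure FTrans where
  src : Proc
  lab : ELab
  tgt : Proc
  ok : Fwd src lab tgt

/-- A backward transition of the proved LTS, as an object. -/
structure BTrans where
  src : Proc
  lab : ELab
  tgt : Proc
  ok : Bwd src lab tgt

end CCSK

/-!
Induction on the first transition `X →[θ₁] X₁`, inverting the second one. Since `θ₁ ⋖ θ₂` fails,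
the two transitions act on different parallel components, or inside a common context
(keyed prefix, restriction, sum, one side of a synchronisation), where the induction hypothesis
applies; key freshness and the side conditions of the rules only see `ℓ(θ)` and the key of `θ`,
which `σ` preserves. The only new case is `!X →[!θ] !X | X' →[|_R ψ] !X | X''`: the swapped path
spawns the copy with `!ψ'` and then performs `|_R θ'`, so the labels agree only up to `σ`. The
extended dependency relation leaves only second transitions inside the spawned copy (for a
spawned synchronisation, only a new synchronisation between its two halves).
-/

namespace CCSK

@[simp] lemma act_collapse (θ : ELab) : (collapse θ).act = θ.act := by
  induction θ <;> simp [collapse, ELab.act, *]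

@[simp] lemma key_collapse (θ : ELab) : (collapse θ).key = θ.key := by
  induction θ <;> simp [collapse, ELab.key, *]

lemma act_eq_of_collapse_eq {φ θ : ELab} (h : collapse φ = collapse θ) : φ.act = θ.act := by
  rw [← act_collapse φ, h, act_collapse]

lemma key_eq_of_collapse_eq {φ θ : ELab} (h : collapse φ = collapse θ) : φ.key = θ.key := by
  rw [← key_collapse φ, h, key_collapse]

def Synchronisable (θ₁ θ₂ : ELab) : Prop :=
  θ₁.act ≠ .tau ∧ θ₂.act = θ₁.act.co ∧ θ₂.key = θ₁.key

lemma Synchronisable.of_collapse_eq {θ₁ θ₂ φ₁ φ₂ : ELab} (h : Synchronisable θ₁ θ₂)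
    (e₁ : collapse φ₁ = collapse θ₁) (e₂ : collapse φ₂ = collapse θ₂) :
    Synchronisable φ₁ φ₂ := by
  obtain ⟨hτ, hco, hk⟩ := h
  simp only [Synchronisable, act_eq_of_collapse_eq e₁, act_eq_of_collapse_eq e₂,
    key_eq_of_collapse_eq e₁, key_eq_of_collapse_eq e₂]
  exact ⟨hτ, hco, hk⟩

namespace FwdR

variable {X X' : Proc} {θ : ELab}

lemma keys_tgt (h : FwdR X θ X') : X'.keys = insert θ.key X.keys := by
  induction h with
  | act hstd => simp [Proc.std] at hstd; simp [Proc.keys, ELab.key, hstd]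
  | pre _ _ ih => simp [Proc.keys, ih, Set.insert_comm]
  | res _ _ _ ih => simp [Proc.keys, ih]
  | parL _ _ ih => simp [Proc.keys, ELab.key, ih, Set.insert_union]
  | parR _ _ ih => simp [Proc.keys, ELab.key, ih, Set.union_insert]
  | syn _ _ _ _ hk ih₁ ih₂ =>
      simp [Proc.keys, ELab.key, ih₁, ih₂, hk, Set.insert_union, Set.union_insert]
  | sumL _ _ ih => simp [Proc.keys, ih, Set.insert_union]
  | sumR _ _ ih => simp [Proc.keys, ih, Set.union_insert]
  | repl1 _ ih => simp [Proc.keys, ELab.key, ih, Set.union_insert]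
  | repl2 _ _ _ _ hk ih₁ ih₂ => simp [Proc.keys, ELab.key, ih₁, ih₂, hk, Set.union_insert]

lemma key_notMem_keys (h : FwdR X θ X') : θ.key ∉ X.keys := by
  induction h with
  | act hstd => simp [Proc.std] at hstd; simp [Proc.keys, hstd]
  | pre _ hk ih => simp only [Proc.keys, Set.mem_insert_iff, not_or]; exact ⟨hk, ih⟩
  | res _ _ _ ih => exact ih
  | parL _ hk ih => simp only [Proc.keys, ELab.key, Set.mem_union, not_or]; exact ⟨ih, hk⟩
  | parR _ hk ih => simp only [Proc.keys, ELab.key, Set.mem_union, not_or]; exact ⟨hk, ih⟩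
  | syn _ _ _ _ hk ih₁ ih₂ =>
      simp only [Proc.keys, ELab.key, Set.mem_union, not_or]; exact ⟨ih₁, hk ▸ ih₂⟩
  | sumL _ hstd ih | sumR _ hstd ih =>
      simp only [Proc.std] at hstd; simp [Proc.keys, hstd, ih]
  | repl1 _ ih => exact ih
  | repl2 _ _ _ _ _ ih₁ _ => exact ih₁

lemma key_mem_keys_tgt (h : FwdR X θ X') : θ.key ∈ X'.keys :=
  h.keys_tgt ▸ Set.mem_insert _ _

lemma not_std_tgt (h : FwdR X θ X') : ¬ X'.std := by
  rw [Proc.std, h.keys_tgt]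
  exact (Set.insert_nonempty _ _).ne_empty

lemma notMem_keys_src {k : Key} (h : FwdR X θ X') (hk : k ∉ X'.keys) : k ∉ X.keys :=
  fun m => hk (h.keys_tgt ▸ Set.mem_insert_of_mem _ m)

lemma notMem_keys_tgt {k : Key} (h : FwdR X θ X') (hk : k ∉ X.keys) (hne : k ≠ θ.key) :
    k ∉ X'.keys := by
  rw [h.keys_tgt, Set.mem_insert_iff, not_or]
  exact ⟨hne, hk⟩

lemma syn_of_collapse_eq {Y Y' : Proc} {θ₁ θ₂ φ₁ φ₂ : ELab} (hX : FwdR X φ₁ X')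
    (hY : FwdR Y φ₂ Y') (e₁ : collapse φ₁ = collapse θ₁) (e₂ : collapse φ₂ = collapse θ₂)
    (hs : Synchronisable θ₁ θ₂) : FwdR (X.par Y) (.syn (.parL φ₁) (.parR φ₂)) (X'.par Y') :=
  have ⟨hτ, hco, hk⟩ := hs.of_collapse_eq e₁ e₂
  .syn hX hY hτ hco hk

lemma repl2_of_collapse_eq {X'' : Proc} {θ₁ θ₂ φ₁ φ₂ : ELab} (h₁ : FwdR X φ₁ X')
    (h₂ : FwdR X φ₂ X'') (e₁ : collapse φ₁ = collapse θ₁) (e₂ : collapse φ₂ = collapse θ₂)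
    (hs : Synchronisable θ₁ θ₂) :
    FwdR (.repl X) (.bang (.syn (.parL φ₁) (.parR φ₂))) ((Proc.repl X).par (X'.par X'')) :=
  have ⟨hτ, hco, hk⟩ := hs.of_collapse_eq e₁ e₂
  .repl2 h₁ h₂ hτ hco hk

end FwdR

def CollapsePath (X : Proc) (θ θ' : ELab) (Y : Proc) : Prop :=
  ∃ Z φ φ', FwdR X φ Z ∧ FwdR Z φ' Y ∧ collapse φ = collapse θ ∧ collapse φ' = collapse θ'

namespace CollapsePath

variable {A B X Y : Proc} {θ θ' : ELab}

lemma kpre {a : Lab} {k : Key} (p : CollapsePath X θ θ' Y) (hk : θ.key ≠ k)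
    (hk' : θ'.key ≠ k) : CollapsePath (.kpre a k X) θ θ' (.kpre a k Y) := by
  obtain ⟨Z, φ, φ', s, s', e, e'⟩ := p
  exact ⟨.kpre a k Z, φ, φ', .pre s (by rwa [key_eq_of_collapse_eq e]),
    .pre s' (by rwa [key_eq_of_collapse_eq e']), e, e'⟩

lemma res {n : ℕ} (p : CollapsePath X θ θ' Y) (hn : θ.act ≠ .name n) (hc : θ.act ≠ .coname n)
    (hn' : θ'.act ≠ .name n) (hc' : θ'.act ≠ .coname n) :
    CollapsePath (X.res n) θ θ' (Y.res n) := by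
  obtain ⟨Z, φ, φ', s, s', e, e'⟩ := p
  rw [← act_eq_of_collapse_eq e] at hn hc
  rw [← act_eq_of_collapse_eq e'] at hn' hc'
  exact ⟨Z.res n, φ, φ', .res s hn hc, .res s' hn' hc', e, e'⟩

lemma sumL (p : CollapsePath X θ θ' Y) (hB : B.std) :
    CollapsePath (X.sum B) θ θ' (Y.sum B) := by
  obtain ⟨Z, φ, φ', s, s', e, e'⟩ := p
  exact ⟨Z.sum B, φ, φ', .sumL s hB, .sumL s' hB, e, e'⟩

lemma sumR (p : CollapsePath X θ θ' Y) (hA : A.std) :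
    CollapsePath (A.sum X) θ θ' (A.sum Y) := by
  obtain ⟨Z, φ, φ', s, s', e, e'⟩ := p
  exact ⟨A.sum Z, φ, φ', .sumR s hA, .sumR s' hA, e, e'⟩

lemma parL (p : CollapsePath X θ θ' Y) (hk : θ.key ∉ B.keys) (hk' : θ'.key ∉ B.keys) :
    CollapsePath (X.par B) (.parL θ) (.parL θ') (Y.par B) := by
  obtain ⟨Z, φ, φ', s, s', e, e'⟩ := p
  exact ⟨Z.par B, .parL φ, .parL φ', .parL s (by rwa [key_eq_of_collapse_eq e]),
    .parL s' (by rwa [key_eq_of_collapse_eq e']), by simp [collapse, e], by simp [collapse, e']⟩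

lemma parR (p : CollapsePath X θ θ' Y) (hk : θ.key ∉ A.keys) (hk' : θ'.key ∉ A.keys) :
    CollapsePath (A.par X) (.parR θ) (.parR θ') (A.par Y) := by
  obtain ⟨Z, φ, φ', s, s', e, e'⟩ := p
  exact ⟨A.par Z, .parR φ, .parR φ', .parR s (by rwa [key_eq_of_collapse_eq e]),
    .parR s' (by rwa [key_eq_of_collapse_eq e']), by simp [collapse, e], by simp [collapse, e']⟩

lemma syn_parL {B' : Proc} {ψ : ELab} (p : CollapsePath X θ θ' Y) (hB : FwdR B ψ B')
    (hs : Synchronisable θ ψ) (hk' : θ'.key ∉ B'.keys) :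
    CollapsePath (X.par B) (.syn (.parL θ) (.parR ψ)) (.parL θ') (Y.par B') := by
  obtain ⟨Z, φ, φ', s, s', e, e'⟩ := p
  exact ⟨Z.par B', .syn (.parL φ) (.parR ψ), .parL φ', s.syn_of_collapse_eq hB e rfl hs,
    .parL s' (by rwa [key_eq_of_collapse_eq e']), by simp [collapse, e], by simp [collapse, e']⟩

lemma syn_parR {A' : Proc} {ψ : ELab} (p : CollapsePath X θ θ' Y) (hA : FwdR A ψ A')
    (hs : Synchronisable ψ θ) (hk' : θ'.key ∉ A'.keys) :
    CollapsePath (A.par X) (.syn (.parL ψ) (.parR θ)) (.parR θ') (A'.par Y) := by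
  obtain ⟨Z, φ, φ', s, s', e, e'⟩ := p
  exact ⟨A'.par Z, .syn (.parL ψ) (.parR φ), .parR φ', hA.syn_of_collapse_eq s rfl e hs,
    .parR s' (by rwa [key_eq_of_collapse_eq e']), by simp [collapse, e], by simp [collapse, e']⟩

lemma parL_syn {B' : Proc} {ψ : ELab} (p : CollapsePath X θ θ' Y) (hB : FwdR B ψ B')
    (hs : Synchronisable θ' ψ) (hk : θ.key ∉ B.keys) :
    CollapsePath (X.par B) (.parL θ) (.syn (.parL θ') (.parR ψ)) (Y.par B') := by
  obtain ⟨Z, φ, φ', s, s', e, e'⟩ := p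
  exact ⟨Z.par B, .parL φ, .syn (.parL φ') (.parR ψ),
    .parL s (by rwa [key_eq_of_collapse_eq e]), s'.syn_of_collapse_eq hB e' rfl hs,
    by simp [collapse, e], by simp [collapse, e']⟩

lemma parR_syn {A' : Proc} {ψ : ELab} (p : CollapsePath X θ θ' Y) (hA : FwdR A ψ A')
    (hs : Synchronisable ψ θ') (hk : θ.key ∉ A.keys) :
    CollapsePath (A.par X) (.parR θ) (.syn (.parL ψ) (.parR θ')) (A'.par Y) := by
  obtain ⟨Z, φ, φ', s, s', e, e'⟩ := p
  exact ⟨A.par Z, .parR φ, .syn (.parL ψ) (.parR φ'),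
    .parR s (by rwa [key_eq_of_collapse_eq e]), hA.syn_of_collapse_eq s' rfl e' hs,
    by simp [collapse, e], by simp [collapse, e']⟩

lemma syn_syn {A' B' : Proc} {ψ ψ' : ELab} (p : CollapsePath A θ θ' A')
    (q : CollapsePath B ψ ψ' B') (hs : Synchronisable θ ψ) (hs' : Synchronisable θ' ψ') :
    CollapsePath (A.par B) (.syn (.parL θ) (.parR ψ)) (.syn (.parL θ') (.parR ψ'))
      (A'.par B') := by
  obtain ⟨Z, φ, φ', s, s', e, e'⟩ := p
  obtain ⟨W, χ, χ', t, t', f, f'⟩ := q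
  exact ⟨Z.par W, .syn (.parL φ) (.parR χ), .syn (.parL φ') (.parR χ'),
    s.syn_of_collapse_eq t e f hs, s'.syn_of_collapse_eq t' e' f' hs',
    by simp [collapse, e, f], by simp [collapse, e', f']⟩

lemma repl1 (p : CollapsePath X θ θ' Y) (hk' : θ'.key ∉ X.keys) :
    CollapsePath (.repl X) (.parR θ) (.bang θ') ((Proc.repl X).par Y) := by
  obtain ⟨Z, φ, φ', s, s', e, e'⟩ := p
  exact ⟨(Proc.repl X).par Z, .bang φ, .parR φ', .repl1 s,
    .parR s' (by rwa [key_eq_of_collapse_eq e']), by simp [collapse, e], by simp [collapse, e']⟩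

lemma repl2 {Y' : Proc} {ψ ψ' : ELab} (p : CollapsePath X θ θ' Y) (q : CollapsePath X ψ ψ' Y')
    (hs : Synchronisable θ ψ) (hs' : Synchronisable θ' ψ') (hk' : θ'.key ∉ X.keys) :
    CollapsePath (.repl X) (.parR (.syn (.parL θ) (.parR ψ)))
      (.bang (.syn (.parL θ') (.parR ψ'))) ((Proc.repl X).par (Y.par Y')) := by
  obtain ⟨Z, φ, φ', s, s', e, e'⟩ := p
  obtain ⟨W, χ, χ', t, t', f, f'⟩ := q
  refine ⟨(Proc.repl X).par (Z.par W), .bang (.syn (.parL φ) (.parR χ)),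
    .parR (.syn (.parL φ') (.parR χ')), s.repl2_of_collapse_eq t e f hs,
    .parR (s'.syn_of_collapse_eq t' e' f' hs') ?_, by simp [collapse, e, f],
    by simp [collapse, e', f']⟩
  simpa [ELab.key, Proc.keys, key_eq_of_collapse_eq e'] using hk'

end CollapsePath

def Swappable (X : Proc) (θ : ELab) (X' : Proc) : Prop :=
  ∀ ⦃θ' : ELab⦄ ⦃Y : Proc⦄, FwdR X' θ' Y → ¬ Dep θ θ' → CollapsePath X θ' θ Y

namespace Swappable

variable {A A' B B' X X' : Proc} {θ : ELab}

lemma base (a : Lab) (k : Key) : Swappable X (.base a k) X' :=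
  fun _ _ _ hd => absurd (Dep.base a k _) hd

lemma kpre {a : Lab} {k : Key} (ih : Swappable X θ X') (hk : θ.key ≠ k) :
    Swappable (.kpre a k X) θ (.kpre a k X') := by
  intro θ' Y h₂ hd
  cases h₂ with
  | pre h₂ hk₂ => exact (ih h₂ hd).kpre hk₂ hk

lemma res {n : ℕ} (ih : Swappable X θ X') (hn : θ.act ≠ .name n) (hc : θ.act ≠ .coname n) :
    Swappable (X.res n) θ (X'.res n) := by
  intro θ' Y h₂ hd
  cases h₂ with
  | res h₂ hn₂ hc₂ => exact (ih h₂ hd).res hn₂ hc₂ hn hc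

lemma sumL (ih : Swappable X θ X') (h : FwdR X θ X') (hB : B.std) :
    Swappable (X.sum B) θ (X'.sum B) := by
  intro θ' Y h₂ hd
  cases h₂ with
  | sumL h₂ _ => exact (ih h₂ hd).sumL hB
  | sumR _ hstd => exact absurd hstd h.not_std_tgt

lemma sumR (ih : Swappable X θ X') (h : FwdR X θ X') (hA : A.std) :
    Swappable (A.sum X) θ (A.sum X') := by
  intro θ' Y h₂ hd
  cases h₂ with
  | sumR h₂ _ => exact (ih h₂ hd).sumR hA
  | sumL _ hstd => exact absurd hstd h.not_std_tgt

lemma parL (ih : Swappable A θ A') (h : FwdR A θ A') (hk : θ.key ∉ B.keys) :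
    Swappable (A.par B) (.parL θ) (A'.par B) := by
  intro θ' Y h₂ hd
  cases h₂ with
  | parL h₂ hk₂ => exact (ih h₂ fun d => hd d.parL).parL hk₂ hk
  | parR h₂ hk₂ =>
      exact ⟨_, _, _, .parR h₂ (h.notMem_keys_src hk₂),
        .parL h (h₂.notMem_keys_tgt hk (ne_of_mem_of_not_mem h.key_mem_keys_tgt hk₂)), rfl, rfl⟩
  | syn hx hy hτ hco hkk =>
      refine (ih hx fun d => hd (.synTgtL d.parL)).syn_parL hy ⟨hτ, hco, hkk⟩ ?_
      exact hy.notMem_keys_tgt hk (hkk ▸ ne_of_mem_of_not_mem h.key_mem_keys_tgt hx.key_notMem_keys)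

lemma parR (ih : Swappable B θ B') (h : FwdR B θ B') (hk : θ.key ∉ A.keys) :
    Swappable (A.par B) (.parR θ) (A.par B') := by
  intro θ' Y h₂ hd
  cases h₂ with
  | parR h₂ hk₂ => exact (ih h₂ fun d => hd d.parR).parR hk₂ hk
  | parL h₂ hk₂ =>
      exact ⟨_, _, _, .parL h₂ (h.notMem_keys_src hk₂),
        .parR h (h₂.notMem_keys_tgt hk (ne_of_mem_of_not_mem h.key_mem_keys_tgt hk₂)), rfl, rfl⟩
  | syn hx hy hτ hco hkk =>
      refine (ih hy fun d => hd (.synTgtR d.parR)).syn_parR hx ⟨hτ, hco, hkk⟩ ?_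
      exact hx.notMem_keys_tgt hk
        (hkk.symm ▸ ne_of_mem_of_not_mem h.key_mem_keys_tgt hy.key_notMem_keys)

lemma syn {α β : ELab} (ihA : Swappable A α A') (ihB : Swappable B β B') (hA : FwdR A α A')
    (hB : FwdR B β B') (hs : Synchronisable α β) :
    Swappable (A.par B) (.syn (.parL α) (.parR β)) (A'.par B') := by
  intro θ' Y h₂ hd
  cases h₂ with
  | parL h₂ hk₂ =>
      exact (ihA h₂ fun d => hd (.synSrcL d.parL)).parL_syn hB hs (hB.notMem_keys_src hk₂)
  | parR h₂ hk₂ =>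
      exact (ihB h₂ fun d => hd (.synSrcR d.parR)).parR_syn hA hs (hA.notMem_keys_src hk₂)
  | syn hx hy hτ hco hkk =>
      exact (ihA hx fun d => hd (.synSynL d.parL)).syn_syn
        (ihB hy fun d => hd (.synSynR d.parR)) ⟨hτ, hco, hkk⟩ hs

lemma repl1 (ih : Swappable X θ X') (h : FwdR X θ X') :
    Swappable (.repl X) (.bang θ) ((Proc.repl X).par X') := by
  intro θ' Y h₂ hd
  cases h₂ with
  | parL _ _ => exact absurd (.bangParL _ _) hd
  | parR h₂ _ => exact (ih h₂ fun d => hd d.bangParR).repl1 h.key_notMem_keys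
  | syn hx _ _ _ _ => cases hx <;> exact absurd (.synTgtL (.bangParL _ _)) hd

lemma repl2 {α β : ELab} {X'' : Proc} (ihα : Swappable X α X') (ihβ : Swappable X β X'')
    (hα : FwdR X α X') (hs : Synchronisable α β) :
    Swappable (.repl X) (.bang (.syn (.parL α) (.parR β))) ((Proc.repl X).par (X'.par X'')) := by
  intro θ' Y h₂ hd
  cases h₂ with
  | parL _ _ => exact absurd (.bangParL _ _) hd
  | syn hx _ _ _ _ => cases hx <;> exact absurd (.synTgtL (.bangParL _ _)) hd
  | parR h₂ _ =>
      cases h₂ with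
      | parL _ _ => exact absurd (.bangParRSynL _ _ _) hd
      | parR _ _ => exact absurd (.bangParRSynR _ _ _) hd
      | syn hx hy hτ hco hkk =>
          exact (ihα hx fun d => hd (.bangParR (.synSynL d.parL))).repl2
            (ihβ hy fun d => hd (.bangParR (.synSynR d.parR))) ⟨hτ, hco, hkk⟩ hs
            hα.key_notMem_keys

end Swappable

lemma FwdR.swappable {X X' : Proc} {θ : ELab} (h : FwdR X θ X') : Swappable X θ X' := by
  induction h with
  | act _ => exact .base _ _
  | pre _ hk ih => exact ih.kpre hk
  | res _ hn hc ih => exact ih.res hn hc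
  | parL h hk ih => exact ih.parL h hk
  | parR h hk ih => exact ih.parR h hk
  | syn hA hB hτ hco hk ihA ihB => exact ihA.syn ihB hA hB ⟨hτ, hco, hk⟩
  | sumL h hB ih => exact ih.sumL h hB
  | sumR h hA ih => exact ih.sumR h hA
  | repl1 h ih => exact ih.repl1 h
  | repl2 hα _ hτ hco hk ihα ihβ => exact ihα.repl2 ihβ hα ⟨hτ, hco, hk⟩

end CCSK

open CCSK in
/-- Extended forward diamond for CCSK with replication, up to the collapsing
function σ. -/
theorem forward_diamond_ext : ∀ (X X₁ Y : Proc) (θ₁ θ₂ : ELab),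
    ReachableR X → FwdR X θ₁ X₁ → FwdR X₁ θ₂ Y → Conc θ₁ θ₂ →
    ∃ (X₂ : Proc) (φ₁ φ₂ : ELab),
      FwdR X φ₂ X₂ ∧ FwdR X₂ φ₁ Y ∧
      collapse φ₁ = collapse θ₁ ∧ collapse φ₂ = collapse θ₂ := by
  intro X X₁ Y θ₁ θ₂ _ h₁ h₂ hc
  obtain ⟨X₂, φ₂, φ₁, s₂, s₁, e₂, e₁⟩ := h₁.swappable h₂ hc.1
  exact ⟨X₂, φ₁, φ₂, s₂, s₁, e₁, e₂⟩
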